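/- arXiv:2510.23291 — 3 statements merged into one kernel-verified Lean document; each statement's English description precedes it below -/
import Mathlib

section
/- Let d be admissible for (a,b). Then Sel^φ_{S_d}(−d·a, d²·b) = Sel^φ_{S_d}(a,b) as subsets of ℚˣ; that is, the truncated φ-Selmer sets of E_{a,b} and of its quadratic twist by −d coincide. -/
open scoped Classical

/-- The local φ-descent set `L_{a,b}(K)` of the 2-isogeny
`φ : E_{a,b} → E_{-2a, a²-4b}`, viewed as a predicate on `K`. -/
def LocDescent (a b : ℤ) {K : Type*} [Field K] (c : K) : Prop :=
  c ≠ 0 ∧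
    ((∃ u : K, c = u ^ 2) ∨
     (∃ u : K, u ≠ 0 ∧ c * u ^ 2 = (a : K) ^ 2 - 4 * (b : K)) ∨
     (∃ x y u : K, x ≠ 0 ∧ u ≠ 0 ∧
        y ^ 2 = x * (x ^ 2 - 2 * (a : K) * x + ((a : K) ^ 2 - 4 * (b : K))) ∧
        c * u ^ 2 = x))

/-- The φ-Selmer set `Sel^φ(a,b) ⊆ ℚˣ`. -/
def SelSet (a b : ℤ) : Set ℚ :=
  { c | LocDescent a b (c : ℝ) ∧
      ∀ (p : ℕ) [Fact p.Prime], LocDescent a b (c : ℚ_[p]) }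

/-- The truncated φ-Selmer set `Sel^φ_{S_d}(a,b)`, where `S_d` consists of `∞`
together with the primes dividing `d`. -/
def SelSetTrunc (a b d : ℤ) : Set ℚ :=
  { c | c ≠ 0 ∧
      ∀ (p : ℕ) [Fact p.Prime], ¬ (p : ℤ) ∣ d → LocDescent a b (c : ℚ_[p]) }

/-- `d` is admissible for `(a, b)`: a positive squarefree product of an odd number of
distinct primes, each `≡ 7 (mod 8)`, prime to `b(a²-4b)`, with `-q` a square in `ℚ_p`
for every prime `p ∣ 2b(a²-4b)`. -/
def Admissible (a b d : ℤ) : Prop :=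
  0 < d ∧ Squarefree d ∧ Odd d.natAbs.primeFactors.card ∧
    ∀ q ∈ d.natAbs.primeFactors,
      q % 8 = 7 ∧ ¬ (q : ℤ) ∣ b * (a ^ 2 - 4 * b) ∧
        ∀ (p : ℕ) [Fact p.Prime], (p : ℤ) ∣ 2 * b * (a ^ 2 - 4 * b) →
          ∃ u : ℚ_[p], u ^ 2 = ((-q : ℤ) : ℚ_[p])

/-- `λ_q(c)`: the parity of the `q`-adic valuation of `c`. -/
noncomputable def lamF (q : ℕ) (c : ℚ) : ZMod 2 := ((padicValRat q c : ℤ) : ZMod 2)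

/-- `γ_q(c)`: `0` if the unit part `c · q^{-v_q(c)}` is a square in `ℚ_qˣ`, `1` otherwise. -/
noncomputable def gamF (q : ℕ) [Fact q.Prime] (c : ℚ) : ZMod 2 :=
  if ∃ u : ℚ_[q], u ^ 2 = ((c * (q : ℚ) ^ (-(padicValRat q c)) : ℚ) : ℚ_[q]) then 0 else 1

/-- `ε_∞(c)`: `0` if `c > 0`, `1` otherwise. -/
def epsF (c : ℚ) : ZMod 2 := if 0 < c then 0 else 1

/-- `q ∈ T_d^-`: the Legendre symbol `(d/q | q)` equals `+1` iff the roots of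
`X² - 2aX + (a²-4b)` are squares in `ℚ_qˣ`. -/
def InTdMinus (a b d : ℤ) (q : ℕ) [Fact q.Prime] : Prop :=
  (legendreSym q (d / q) = 1) ↔
    ∀ β : ℚ_[q],
      β ^ 2 - 2 * (a : ℚ_[q]) * β + ((a : ℚ_[q]) ^ 2 - 4 * (b : ℚ_[q])) = 0 →
      ∃ u : ℚ_[q], u ^ 2 = β

/-- The matrix `A_d` over `𝔽₂`, indexed by the primes dividing `d`. -/
noncomputable def matA (a b d : ℤ) :
    Matrix {q : ℕ // q ∈ d.natAbs.primeFactors} {q : ℕ // q ∈ d.natAbs.primeFactors}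
      (ZMod 2) :=
  Matrix.of fun p q =>
    haveI : Fact (p.1).Prime := ⟨Nat.prime_of_mem_primeFactors p.2⟩
    if p = q then (if InTdMinus a b d p.1 then 1 else 0)
    else if legendreSym p.1 (q.1 : ℤ) = 1 then 0 else 1

/-- The entrywise complement `Ā_d = A_d + J`. -/
noncomputable def matABar (a b d : ℤ) :
    Matrix {q : ℕ // q ∈ d.natAbs.primeFactors} {q : ℕ // q ∈ d.natAbs.primeFactors}
      (ZMod 2) :=
  Matrix.of fun p q => matA a b d p q + 1

/-- `Ã_d`: `A_d` with an all-ones column prepended. -/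
noncomputable def matATilde (a b d : ℤ) :
    Matrix {q : ℕ // q ∈ d.natAbs.primeFactors}
      (Unit ⊕ {q : ℕ // q ∈ d.natAbs.primeFactors}) (ZMod 2) :=
  Matrix.of fun p => Sum.elim (fun _ => 1) (fun q => matA a b d p q)

/-- `Â_d`: an all-ones row on top of `Ā_d`. -/
noncomputable def matAHat (a b d : ℤ) :
    Matrix (Unit ⊕ {q : ℕ // q ∈ d.natAbs.primeFactors})
      {q : ℕ // q ∈ d.natAbs.primeFactors} (ZMod 2) :=
  Matrix.of (Sum.elim (fun _ _ => 1) (fun p q => matA a b d p q + 1))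

/-- `η_φ(d) = 1`. -/
def EtaOne (a b d : ℤ) : Prop :=
  ∃ c ∈ SelSetTrunc a b d,
    epsF c + ∑ q ∈ d.natAbs.primeFactors, lamF q c = 1

/-- The subgroup of squares in `ℚˣ`. -/
def QSq : Subgroup ℚˣ := (powMonoidHom 2 : ℚˣ →* ℚˣ).range

/-- The φ-Selmer group `Sel^φ(E_{a,b}/ℚ)`: the image of `Sel^φ(a,b)` in `ℚˣ/(ℚˣ)²`. -/
def SelGroup (a b : ℤ) : Set (ℚˣ ⧸ QSq) :=
  { x | ∃ c : ℚˣ, (c : ℚ) ∈ SelSet a b ∧ (QuotientGroup.mk c : ℚˣ ⧸ QSq) = x }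


/-!
Fix a prime `p ∤ d`. If `p ∣ 2b(a² - 4b)`, admissibility makes `-d = s²` a square in `ℚ_p`, and
`(x, y) ↦ (s²x, s³y)` identifies the twist with `E_{a,b}` over `ℚ_p`, so the local descent sets
agree. Otherwise both curves have good reduction at the odd prime `p`, and there the local descent
set is exactly the set of `c` of even valuation, which does not depend on the curve. Even valuation
is forced by the ultrametric inequality. Conversely, a unit `c` is either a square, or a square
times `a² - 4b` (when that is a nonsquare mod `p`), or the `x`-coordinate of a point up to squares:
a point with nonsquare `x`-coordinate exists on the reduction because
`∑ₓ χ(x² - 2ax + a² - 4b) = -1`, and it lifts by Hensel's lemma.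
-/

section CharSum

variable {F : Type*} [Field F] [Fintype F]

lemma isSquare_mul_of_not_isSquare {x y : F} (hx : ¬IsSquare x) (hy : ¬IsSquare y) :
    IsSquare (x * y) := by
  have hxy : x * y ≠ 0 := mul_ne_zero (fun h => hx (h ▸ IsSquare.zero))
    (fun h => hy (h ▸ IsSquare.zero))
  refine (quadraticChar_one_iff_isSquare hxy).1 ?_
  rw [map_mul, quadraticChar_neg_one_iff_not_isSquare.2 hx,
    quadraticChar_neg_one_iff_not_isSquare.2 hy]
  rfl

lemma sum_quadraticChar_sq_sub (hF : ringChar F ≠ 2) {e : F} (he : e ≠ 0) :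
    ∑ x : F, quadraticChar F (x ^ 2 - e) = -1 := by
  set χ := quadraticChar F
  have hfiber : ∑ x : F, χ (x ^ 2 - e) = ∑ y : F, (χ y + 1) * χ (y - e) := by
    rw [← Finset.sum_fiberwise Finset.univ (· ^ 2)]
    refine Fintype.sum_congr _ _ fun y => ?_
    rw [Finset.sum_congr rfl fun x hx => by rw [(Finset.mem_filter.1 hx).2], Finset.sum_const,
      ← quadraticChar_card_sqrts hF y, nsmul_eq_mul, Set.toFinset_ofPred]
  have hshift : ∑ y : F, χ (y - e) = 0 := by
    rw [Fintype.sum_equiv (Equiv.subRight e) (fun y => χ (y - e)) χ fun _ => rfl]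
    exact quadraticChar_sum_zero hF
  have hjacobi : ∑ y : F, χ y * χ (y - e) = -1 := by
    calc ∑ y : F, χ y * χ (y - e) = ∑ t : F, χ (e * t) * χ (e * t - e) :=
          (Fintype.sum_bijective _ (mulLeft_bijective₀ e he) _ _ fun _ => rfl).symm
      _ = ∑ t : F, χ (-1) * (χ t * χ⁻¹ (1 - t)) := by
          refine Fintype.sum_congr _ _ fun t => ?_
          rw [(quadraticChar_isQuadratic F).inv, show e * t - e = e * (-1 * (1 - t)) by ring,
            map_mul, map_mul, map_mul]
          linear_combination (χ t * χ (-1) * χ (1 - t)) * quadraticChar_sq_one he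
      _ = -1 := by
          rw [← Finset.mul_sum, ← jacobiSum, jacobiSum_nontrivial_inv (quadraticChar_ne_one hF)]
          linear_combination -quadraticChar_sq_one (neg_ne_zero.2 (one_ne_zero (α := F)))
  rw [hfiber]
  simp only [add_mul, one_mul, Finset.sum_add_distrib, hshift, hjacobi, add_zero]

lemma exists_not_isSquare_isSquare_mul_quadratic (hF : ringChar F ≠ 2) {A D : F}
    (hdisc : A ^ 2 - D ≠ 0) (hD : D ≠ 0) (hDsq : IsSquare D) :
    ∃ x : F, ¬IsSquare x ∧ IsSquare (x * (x ^ 2 - 2 * A * x + D)) := by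
  set χ := quadraticChar F
  by_contra! h
  have hsum : ∑ x : F, χ (x ^ 2 - 2 * A * x + D) = -1 := by
    rw [← sum_quadraticChar_sq_sub hF hdisc]
    exact Fintype.sum_equiv (Equiv.subRight A) _ _ fun x => by
      rw [Equiv.subRight_apply]; congr 1; ring
  -- summing over `x` gives `1 ≤ -1`
  have hle : ∀ x : F, -χ x + (if x = 0 then 1 else 0) ≤ χ (x ^ 2 - 2 * A * x + D) := by
    intro x
    by_cases hx0 : x = 0
    · subst hx0
      simp [χ, quadraticChar_one_iff_isSquare hD |>.2 hDsq]
    by_cases hx : IsSquare x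
    · rw [if_neg hx0, quadraticChar_one_iff_isSquare hx0 |>.2 hx]
      rcases quadraticChar_isQuadratic F (x ^ 2 - 2 * A * x + D) with h' | h' | h' <;>
        simp [χ, h']
    · have hmul := quadraticChar_neg_one_iff_not_isSquare.2 (h x hx)
      rw [map_mul, quadraticChar_neg_one_iff_not_isSquare.2 hx] at hmul
      rw [if_neg hx0, quadraticChar_neg_one_iff_not_isSquare.2 hx]
      linarith
  have := Finset.sum_le_sum fun x (_ : x ∈ Finset.univ) => hle x
  rw [hsum, Finset.sum_add_distrib, Finset.sum_neg_distrib, quadraticChar_sum_zero hF,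
    Finset.sum_ite_eq' Finset.univ (0 : F)] at this
  simp at this

end CharSum

namespace PadicInt

variable {p : ℕ} [Fact p.Prime]

lemma toZMod_eq_zero_iff_norm_lt_one (x : ℤ_[p]) : toZMod x = 0 ↔ ‖x‖ < 1 := by
  rw [← RingHom.mem_ker, ker_toZMod, IsLocalRing.mem_maximalIdeal, mem_nonunits_iff,
    not_isUnit_iff]

lemma toZMod_ne_zero_iff_norm_eq_one (x : ℤ_[p]) : toZMod x ≠ 0 ↔ ‖x‖ = 1 := by
  rw [Ne, toZMod_eq_zero_iff_norm_lt_one, not_lt, le_antisymm_iff, and_iff_right x.norm_le_one]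

lemma exists_root_of_toZMod {P : Polynomial ℤ_[p]} {t : ℤ_[p]}
    (hroot : toZMod (P.eval t) = 0) (hsimple : toZMod (P.derivative.eval t) ≠ 0) :
    ∃ z : ℤ_[p], P.eval z = 0 ∧ toZMod z = toZMod t := by
  rw [toZMod_ne_zero_iff_norm_eq_one] at hsimple
  rw [toZMod_eq_zero_iff_norm_lt_one] at hroot
  obtain ⟨z, hz, hclose, -⟩ :=
    hensels_lemma (F := P) (a := t) (by simpa [Polynomial.coe_aeval_eq_eval, hsimple] using hroot)
  rw [Polynomial.coe_aeval_eq_eval, hsimple, ← toZMod_eq_zero_iff_norm_lt_one, map_sub,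
    sub_eq_zero] at hclose
  exact ⟨z, by rwa [Polynomial.coe_aeval_eq_eval] at hz, hclose⟩

lemma isSquare_of_isSquare_toZMod (hp : p ≠ 2) {z : ℤ_[p]} (hz : toZMod z ≠ 0)
    (h : IsSquare (toZMod z)) : IsSquare z := by
  obtain ⟨r, hr⟩ := h
  obtain ⟨t, rfl⟩ := ZMod.ringHom_surjective toZMod r
  have h2 : (2 : ZMod p) ≠ 0 := Ring.two_ne_zero (by rwa [ZMod.ringChar_zmod_n])
  have ht : toZMod t ≠ 0 := left_ne_zero_of_mul (hr ▸ hz)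
  obtain ⟨s, hs, -⟩ := exists_root_of_toZMod (P := .X ^ 2 - .C z) (t := t)
    (by simp [hr, sq]) (by simpa [map_ofNat, one_add_one_eq_two] using mul_ne_zero h2 ht)
  exact ⟨s, by simp only [Polynomial.eval_sub, Polynomial.eval_pow, Polynomial.eval_X,
    Polynomial.eval_C, sub_eq_zero] at hs; rw [← hs, sq]⟩

lemma exists_mul_sq_eq_of_isSquare_toZMod_mul (hp : p ≠ 2) {z w : ℤ_[p]} (hz : toZMod z ≠ 0)
    (hw : toZMod w ≠ 0) (h : IsSquare (toZMod z * toZMod w)) :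
    ∃ u : ℚ_[p], u ≠ 0 ∧ (z : ℚ_[p]) * u ^ 2 = w := by
  obtain ⟨s, hs⟩ := isSquare_of_isSquare_toZMod hp (z := z * w)
    (by rw [map_mul]; exact mul_ne_zero hz hw) (by rwa [map_mul])
  have hz0 : (z : ℚ_[p]) ≠ 0 := fun h0 => hz (by rw [coe_eq_zero.1 h0, map_zero])
  have hs0 : (s : ℚ_[p]) ≠ 0 := fun h0 =>
    mul_ne_zero hz hw (by rw [← map_mul, hs, coe_eq_zero.1 h0, mul_zero, map_zero])
  have hsq : (s : ℚ_[p]) * s = z * w := by exact_mod_cast congrArg ((↑) : ℤ_[p] → ℚ_[p]) hs.symm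
  refine ⟨s / z, div_ne_zero hs0 hz0, ?_⟩
  field_simp
  linear_combination hsq

lemma exists_sq_eq_mul_quadratic_of_isSquare_toZMod (hp : p ≠ 2) {A D : ℤ_[p]}
    (hdisc : toZMod (A ^ 2 - D) ≠ 0) {x₀ : ZMod p}
    (h : IsSquare (x₀ * (x₀ ^ 2 - 2 * toZMod A * x₀ + toZMod D))) :
    ∃ x y : ℤ_[p], toZMod x = x₀ ∧ y ^ 2 = x * (x ^ 2 - 2 * A * x + D) := by
  obtain ⟨t, rfl⟩ := ZMod.ringHom_surjective toZMod x₀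
  have hH : toZMod (t ^ 2 - 2 * A * t + D) = toZMod t ^ 2 - 2 * toZMod A * toZMod t + toZMod D := by
    simp [map_ofNat]
  by_cases hroot : toZMod (t ^ 2 - 2 * A * t + D) = 0
  · have h2 : (2 : ZMod p) ≠ 0 := Ring.two_ne_zero (by rwa [ZMod.ringChar_zmod_n])
    -- at a double root `t ≡ A`, the residue of the quadratic would be `-(A² - D) ≠ 0`
    have hsimple : toZMod (2 * t - 2 * A) ≠ 0 := by
      intro h0
      rw [map_sub, map_mul, map_mul, map_ofNat, ← mul_sub, mul_eq_zero, sub_eq_zero] at h0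
      refine hdisc ?_
      rw [hH, h0.resolve_left h2] at hroot
      rw [map_sub, map_pow]
      linear_combination -hroot
    obtain ⟨x, hx, hxt⟩ := exists_root_of_toZMod
      (P := .X ^ 2 - .C (2 * A) * .X + .C D) (t := t) (by simpa [map_ofNat] using hroot)
      (by simpa [map_ofNat, one_add_one_eq_two] using hsimple)
    refine ⟨x, 0, hxt, ?_⟩
    simp only [Polynomial.eval_add, Polynomial.eval_sub, Polynomial.eval_mul, Polynomial.eval_pow,
      Polynomial.eval_X, Polynomial.eval_C] at hx
    rw [hx]
    ring
  by_cases ht0 : toZMod t = 0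
  · exact ⟨0, 0, by rw [map_zero, ht0], by ring⟩
  obtain ⟨y, hy⟩ := isSquare_of_isSquare_toZMod hp (z := t * (t ^ 2 - 2 * A * t + D))
    (by rw [map_mul]; exact mul_ne_zero ht0 hroot) (by rwa [map_mul, hH])
  exact ⟨t, y, rfl, by rw [sq, ← hy]⟩

end PadicInt

section LocDescent

variable {K : Type*} [Field K] {a b : ℤ} {c : K}

lemma LocDescent.mul_sq {u : K} (hu : u ≠ 0) (h : LocDescent a b c) :
    LocDescent a b (c * u ^ 2) := by
  obtain ⟨hc, ⟨s, hs⟩ | ⟨t, ht, hD⟩ | ⟨x, y, t, hx, ht, hy, hcx⟩⟩ := h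
  · exact ⟨mul_ne_zero hc (pow_ne_zero 2 hu), Or.inl ⟨s * u, by rw [hs]; ring⟩⟩
  · refine ⟨mul_ne_zero hc (pow_ne_zero 2 hu), Or.inr (Or.inl ⟨t / u, div_ne_zero ht hu, ?_⟩)⟩
    rw [← hD]
    field_simp
  · refine ⟨mul_ne_zero hc (pow_ne_zero 2 hu),
      Or.inr (Or.inr ⟨x, y, t / u, hx, div_ne_zero ht hu, hy, ?_⟩)⟩
    rw [← hcx]
    field_simp

lemma locDescent_mul_sq_iff {u : K} (hu : u ≠ 0) :
    LocDescent a b (c * u ^ 2) ↔ LocDescent a b c :=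
  ⟨fun h => by simpa [mul_assoc, ← mul_pow, hu] using h.mul_sq (inv_ne_zero hu),
    fun h => h.mul_sq hu⟩

lemma LocDescent.of_scale {a' b' : ℤ} {s : K} (hs : s ≠ 0) (ha : (a' : K) = s ^ 2 * a)
    (hD : (a' : K) ^ 2 - 4 * b' = s ^ 4 * ((a : K) ^ 2 - 4 * b)) (h : LocDescent a b c) :
    LocDescent a' b' c := by
  obtain ⟨hc, hsq | ⟨t, ht, hcD⟩ | ⟨x, y, t, hx, ht, hy, hcx⟩⟩ := h
  · exact ⟨hc, Or.inl hsq⟩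
  · refine ⟨hc, Or.inr (Or.inl ⟨s ^ 2 * t, mul_ne_zero (pow_ne_zero 2 hs) ht, ?_⟩)⟩
    rw [hD, ← hcD]
    ring
  · refine ⟨hc, Or.inr (Or.inr ⟨s ^ 2 * x, s ^ 3 * y, s * t, mul_ne_zero (pow_ne_zero 2 hs) hx,
      mul_ne_zero hs ht, ?_, by rw [← hcx]; ring⟩)⟩
    rw [hD, ha]
    linear_combination s ^ 6 * hy

lemma locDescent_twist_iff {d : ℤ} (hd : (d : K) ≠ 0) (hsq : IsSquare ((-d : ℤ) : K)) :
    LocDescent (-d * a) (d ^ 2 * b) c ↔ LocDescent a b c := by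
  obtain ⟨s, hs⟩ := hsq
  have hds : (d : K) = -s ^ 2 := by push_cast at hs; linear_combination -hs
  have hs0 : s ≠ 0 := by rintro rfl; exact hd (by simpa using hds)
  refine ⟨LocDescent.of_scale (s := s⁻¹) (inv_ne_zero hs0) ?_ ?_,
    LocDescent.of_scale hs0 ?_ ?_⟩ <;>
  · push_cast
    rw [hds]
    field_simp

end LocDescent

section GoodReduction

lemma exists_norm_eq_sq_of_sq_eq_mul_quadratic {K : Type*} [NormedField K] [IsUltrametricDist K]
    {A D x y : K} (hA : ‖A‖ ≤ 1) (hD : ‖D‖ = 1) (hy : y ^ 2 = x * (x ^ 2 - 2 * A * x + D)) :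
    ∃ v : K, ‖x‖ = ‖v‖ ^ 2 := by
  have h2A : ‖2 * A‖ ≤ 1 := by
    rw [norm_mul]
    exact mul_le_one₀ (by exact_mod_cast IsUltrametricDist.norm_natCast_le_one K 2)
      (norm_nonneg _) hA
  have hy' : ‖y‖ ^ 2 = ‖x‖ * ‖x ^ 2 - 2 * A * x + D‖ := by rw [← norm_pow, hy, norm_mul]
  rcases lt_trichotomy ‖x‖ 1 with hlt | heq | hgt
  · -- `D` dominates the quadratic factor
    have hsmall : ‖x * (x - 2 * A)‖ < ‖D‖ := by
      rw [hD, norm_mul]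
      refine mul_lt_one_of_nonneg_of_lt_one_left (norm_nonneg _) hlt ?_
      rw [sub_eq_add_neg]
      refine (IsUltrametricDist.norm_add_le_max _ _).trans ?_
      rw [norm_neg]
      exact max_le hlt.le h2A
    have hH : ‖x ^ 2 - 2 * A * x + D‖ = 1 := by
      rw [show x ^ 2 - 2 * A * x + D = x * (x - 2 * A) + D by ring,
        IsUltrametricDist.norm_add_eq_max_of_norm_ne_norm hsmall.ne, max_eq_right hsmall.le, hD]
    exact ⟨y, by rw [hy', hH, mul_one]⟩
  · exact ⟨1, by rw [heq, norm_one, one_pow]⟩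
  · -- `x²` dominates the quadratic factor
    have hsmall : ‖D - 2 * A * x‖ < ‖x ^ 2‖ := by
      rw [norm_pow, sub_eq_add_neg]
      refine (IsUltrametricDist.norm_add_le_max _ _).trans_lt (max_lt (by nlinarith) ?_)
      rw [norm_neg, norm_mul]
      nlinarith [norm_nonneg (2 * A)]
    have hH : ‖x ^ 2 - 2 * A * x + D‖ = ‖x‖ ^ 2 := by
      rw [show x ^ 2 - 2 * A * x + D = x ^ 2 + (D - 2 * A * x) by ring,
        IsUltrametricDist.norm_add_eq_max_of_norm_ne_norm hsmall.ne', max_eq_left hsmall.le,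
        norm_pow]
    have hx0 : ‖x‖ ≠ 0 := by linarith
    refine ⟨y / x, ?_⟩
    rw [norm_div, div_pow, hy', hH]
    field_simp

lemma LocDescent.exists_norm_eq_sq {K : Type*} [NormedField K] [IsUltrametricDist K] {a b : ℤ}
    (hD : ‖((a ^ 2 - 4 * b : ℤ) : K)‖ = 1) {c : K} (h : LocDescent a b c) :
    ∃ v : K, ‖c‖ = ‖v‖ ^ 2 := by
  push_cast at hD
  obtain ⟨-, ⟨s, hs⟩ | ⟨u, hu, hcD⟩ | ⟨x, y, u, -, hu, hy, hcx⟩⟩ := h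
  · exact ⟨s, by rw [hs, norm_pow]⟩
  · refine ⟨u⁻¹, ?_⟩
    rw [norm_inv, inv_pow]
    exact eq_inv_of_mul_eq_one_left (by rw [← norm_pow, ← norm_mul, hcD, hD])
  · obtain ⟨v, hv⟩ := exists_norm_eq_sq_of_sq_eq_mul_quadratic
      (IsUltrametricDist.norm_intCast_le_one K a) hD hy
    refine ⟨v / u, ?_⟩
    have hu' : ‖u‖ ≠ 0 := norm_ne_zero_iff.2 hu
    rw [norm_div, div_pow, ← hv, ← hcx, norm_mul, norm_pow]
    field_simp

variable {p : ℕ} [Fact p.Prime]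

open PadicInt

lemma locDescent_of_toZMod_ne_zero (hp : p ≠ 2) {a b : ℤ} (hb : (b : ZMod p) ≠ 0)
    (hD : ((a ^ 2 - 4 * b : ℤ) : ZMod p) ≠ 0) {z : ℤ_[p]} (hz : toZMod z ≠ 0) :
    LocDescent a b (z : ℚ_[p]) := by
  have hchar : ringChar (ZMod p) ≠ 2 := by rwa [ZMod.ringChar_zmod_n]
  set Dz : ℤ_[p] := ((a ^ 2 - 4 * b : ℤ) : ℤ_[p])
  have hDz : toZMod Dz = ((a ^ 2 - 4 * b : ℤ) : ZMod p) := map_intCast _ _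
  have hDcast : (Dz : ℚ_[p]) = (a : ℚ_[p]) ^ 2 - 4 * (b : ℚ_[p]) := by
    simp only [Dz, coe_intCast]
    push_cast
    ring
  refine ⟨fun h0 => hz (by rw [coe_eq_zero.1 h0, map_zero]), ?_⟩
  by_cases hzsq : IsSquare (toZMod z)
  · obtain ⟨s, hs⟩ := isSquare_of_isSquare_toZMod hp hz hzsq
    exact Or.inl ⟨s, by rw [hs, sq]; push_cast; rfl⟩
  by_cases hDsq : IsSquare (toZMod Dz)
  · have hdisc : toZMod ((a : ℤ_[p]) ^ 2 - Dz) ≠ 0 := by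
      have h2 := Ring.two_ne_zero hchar
      have h4b : toZMod ((a : ℤ_[p]) ^ 2 - Dz) = 2 * 2 * (b : ZMod p) := by
        rw [map_sub, map_pow, hDz, map_intCast]
        push_cast
        ring
      rw [h4b]
      exact mul_ne_zero (mul_ne_zero h2 h2) hb
    obtain ⟨x₀, hx₀, hpt⟩ := exists_not_isSquare_isSquare_mul_quadratic hchar
      (A := toZMod (a : ℤ_[p])) (D := toZMod Dz) (by rwa [← map_pow, ← map_sub]) (hDz ▸ hD) hDsq
    obtain ⟨x, y, hx, hy⟩ := exists_sq_eq_mul_quadratic_of_isSquare_toZMod hp hdisc hpt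
    have hx0 : toZMod x ≠ 0 := hx ▸ fun h0 => hx₀ (h0 ▸ IsSquare.zero)
    obtain ⟨u, hu, hzu⟩ := exists_mul_sq_eq_of_isSquare_toZMod_mul hp hz hx0
      (hx ▸ isSquare_mul_of_not_isSquare hzsq hx₀)
    refine Or.inr (Or.inr ⟨x, y, u, fun h0 => hx0 (by rw [coe_eq_zero.1 h0, map_zero]), hu,
      ?_, hzu⟩)
    rw [← hDcast]
    exact_mod_cast congrArg ((↑) : ℤ_[p] → ℚ_[p]) hy
  · obtain ⟨u, hu, hzu⟩ := exists_mul_sq_eq_of_isSquare_toZMod_mul hp hz (hDz ▸ hD)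
      (isSquare_mul_of_not_isSquare hzsq hDsq)
    exact Or.inr (Or.inl ⟨u, hu, by rw [hzu, hDcast]⟩)

lemma locDescent_iff_norm_eq_sq {a b : ℤ}
    (hgood : ¬ (p : ℤ) ∣ 2 * b * (a ^ 2 - 4 * b)) (c : ℚ_[p]) :
    LocDescent a b c ↔ c ≠ 0 ∧ ∃ v : ℚ_[p], ‖c‖ = ‖v‖ ^ 2 := by
  have hp2 : p ≠ 2 := by
    rintro rfl
    exact hgood (dvd_mul_of_dvd_left (dvd_mul_right _ _) _)
  have hb : ¬ (p : ℤ) ∣ b := fun h => hgood (dvd_mul_of_dvd_left (dvd_mul_of_dvd_right h _) _)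
  have hD : ¬ (p : ℤ) ∣ a ^ 2 - 4 * b := fun h => hgood (dvd_mul_of_dvd_right h _)
  refine ⟨fun h => ⟨h.1, h.exists_norm_eq_sq ?_⟩, fun ⟨hc, v, hv⟩ => ?_⟩
  · exact le_antisymm (Padic.norm_int_le_one _) (not_lt.1 (mt Padic.norm_intCast_lt_one_iff.1 hD))
  have hv0 : v ≠ 0 := by
    rintro rfl
    exact hc (norm_eq_zero.1 (by simpa using hv))
  have hz : ‖c / v ^ 2‖ = 1 := by
    rw [norm_div, norm_pow, hv, div_self (by positivity)]
  obtain ⟨z, hzc⟩ : ∃ z : ℤ_[p], (z : ℚ_[p]) = c / v ^ 2 := ⟨⟨_, hz.le⟩, rfl⟩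
  rw [show c = (z : ℚ_[p]) * v ^ 2 by rw [hzc]; field_simp, locDescent_mul_sq_iff hv0]
  refine locDescent_of_toZMod_ne_zero hp2 ?_ ?_ ((toZMod_ne_zero_iff_norm_eq_one z).2 ?_)
  · rwa [Ne, ZMod.intCast_zmod_eq_zero_iff_dvd]
  · rwa [Ne, ZMod.intCast_zmod_eq_zero_iff_dvd]
  · rwa [norm_def, hzc]

end GoodReduction

lemma isSquare_neg_of_forall_mem_primeFactors {R : Type*} [CommRing R] {d : ℤ} (hd : 0 < d)
    (hsf : Squarefree d) (hodd : Odd d.natAbs.primeFactors.card)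
    (h : ∀ q ∈ d.natAbs.primeFactors, IsSquare ((-q : ℤ) : R)) : IsSquare ((-d : ℤ) : R) := by
  have hprod : ∏ q ∈ d.natAbs.primeFactors, (-(q : ℤ)) = -d := by
    rw [Finset.prod_neg, hodd.neg_one_pow, ← Nat.cast_prod,
      Nat.prod_primeFactors_of_squarefree (Int.squarefree_natAbs.2 hsf), Int.natCast_natAbs,
      abs_of_pos hd, neg_one_mul]
  rw [← hprod, Int.cast_prod]
  exact Finset.isSquare_prod _ h

theorem stmt4_general (a b : ℤ) (d : ℤ)
    (hd : Admissible a b d) :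
    SelSetTrunc (-d * a) (d ^ 2 * b) d = SelSetTrunc a b d := by
  obtain ⟨hdpos, hsf, hodd, hq⟩ := hd
  suffices h : ∀ (p : ℕ) [Fact p.Prime], ¬ (p : ℤ) ∣ d →
      ∀ c : ℚ_[p], LocDescent (-d * a) (d ^ 2 * b) c ↔ LocDescent a b c by
    ext c
    exact and_congr_right fun _ => forall_congr' fun p => forall_congr' fun _ =>
      forall_congr' fun hpd => h p hpd c
  intro p _ hpd c
  by_cases hbad : (p : ℤ) ∣ 2 * b * (a ^ 2 - 4 * b)
  · refine locDescent_twist_iff (by exact_mod_cast hdpos.ne')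
      (isSquare_neg_of_forall_mem_primeFactors hdpos hsf hodd fun q hq' => ?_)
    obtain ⟨u, hu⟩ := (hq q hq').2.2 p hbad
    exact ⟨u, by rw [← hu, sq]⟩
  have hpZ : Prime (p : ℤ) := Nat.prime_iff_prime_int.1 Fact.out
  have hgood : ¬ (p : ℤ) ∣ 2 * (d ^ 2 * b) * ((-d * a) ^ 2 - 4 * (d ^ 2 * b)) := by
    rw [show 2 * (d ^ 2 * b) * ((-d * a) ^ 2 - 4 * (d ^ 2 * b))
      = d ^ 4 * (2 * b * (a ^ 2 - 4 * b)) by ring]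
    exact fun h => (hpZ.dvd_or_dvd h).elim (fun h' => hpd (hpZ.dvd_of_dvd_pow h')) hbad
  rw [locDescent_iff_norm_eq_sq hgood, locDescent_iff_norm_eq_sq hbad]

theorem stmt4 (a b : ℤ) (hab : b * (a ^ 2 - 4 * b) ≠ 0) (d : ℤ)
    (hd : Admissible a b d) :
    SelSetTrunc (-d * a) (d ^ 2 * b) d = SelSetTrunc a b d :=
  stmt4_general a b d hd
end

section
/- Let d be admissible for (a,b). Then for every prime q dividing d, the element −q lies in Sel^φ_{S_d}(a,b). -/
/-!
At a prime `p ∤ 2b(a² - 4b)` the isogeny has good reduction and every `p`-adic unit lies in the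
local image. A nonsquare unit is a square times `a² - 4b` (the image of the `2`-torsion point) when
`a² - 4b` is a nonsquare mod `p`; otherwise it is a square times the `x`-coordinate of a point of
`E_{-2a, a²-4b}(ℤ_p)` whose `x` is a nonsquare mod `p`. Such a point is found mod `p` by a
character-sum argument and lifted by Hensel's lemma. At the primes dividing `2b(a² - 4b)`, `-q` is
a square by admissibility.
-/

open scoped Classical

section QuadraticCharSums

open Finset

variable {F : Type*} [Field F] [Fintype F] [DecidableEq F]

theorem quadraticChar_sum_one_sub_mul_inv (hF : ringChar F ≠ 2) {c : F} (hc : c ≠ 0) :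
    ∑ w : F, quadraticChar F (1 - c * w⁻¹) = 0 := by
  have hbij : Function.Bijective fun w : F => 1 - c * w⁻¹ :=
    Finite.injective_iff_bijective.mp fun v w h => by simpa [hc] using h
  rw [Fintype.sum_bijective _ hbij _ (quadraticChar F) fun _ => rfl, quadraticChar_sum_zero hF]

-- `w ↦ 1 - c * w⁻¹` is a bijection of `F` (as `0⁻¹ = 0`); the summands agree off `w = 0`.
theorem quadraticChar_sum_mul_sub (hF : ringChar F ≠ 2) {c : F} (hc : c ≠ 0) :
    ∑ w : F, quadraticChar F (w * (w - c)) = -1 := by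
  have key : ∀ w : F, quadraticChar F (w * (w - c)) =
      quadraticChar F (1 - c * w⁻¹) - if w = 0 then 1 else 0 := by
    intro w
    by_cases hw : w = 0
    · simp [hw]
    · rw [if_neg hw, sub_zero, show w * (w - c) = w ^ 2 * (1 - c * w⁻¹) by field_simp,
        map_mul, quadraticChar_sq_one' hw, one_mul]
  simp only [key, sum_sub_distrib, quadraticChar_sum_one_sub_mul_inv hF hc, sum_ite_eq',
    mem_univ, if_true, zero_sub]

theorem quadraticChar_sum_sq_sub (hF : ringChar F ≠ 2) {c : F} (hc : c ≠ 0) :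
    ∑ z : F, quadraticChar F (z ^ 2 - c) = -1 := by
  have fiber : ∀ w : F, ∑ z ∈ univ.filter (fun z => z ^ 2 = w), quadraticChar F (z ^ 2 - c) =
      (quadraticChar F w + 1) * quadraticChar F (w - c) := by
    intro w
    rw [sum_congr rfl fun z hz => by rw [(mem_filter.mp hz).2], sum_const, nsmul_eq_mul,
      ← quadraticChar_card_sqrts hF w, Set.toFinset_ofPred]
  rw [← sum_fiberwise univ (fun z => z ^ 2), sum_congr rfl fun w _ => fiber w]
  simp only [add_mul, one_mul, ← map_mul, sum_add_distrib, quadraticChar_sum_mul_sub hF hc]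
  rw [Fintype.sum_equiv (Equiv.subRight c) (fun w => quadraticChar F (w - c)) _ fun _ => rfl,
    quadraticChar_sum_zero hF, add_zero]

theorem exists_quadraticChar_eq_neg_one_and_sub_sq_sub (hF : ringChar F ≠ 2) {A c : F}
    (hc : c ≠ 0) (hA : quadraticChar F (A ^ 2 - c) = 1)
    (hroots : ∀ r : F, (r - A) ^ 2 = c → quadraticChar F r ≠ -1) :
    ∃ x : F, quadraticChar F x = -1 ∧ quadraticChar F ((x - A) ^ 2 - c) = -1 := by
  -- Else `-χ x ≤ χ ((x - A) ^ 2 - c)` for all `x`, strictly at `0`; the sums are `0` and `-1`.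
  by_contra! h
  have pointwise : ∀ x : F, -quadraticChar F x ≤ quadraticChar F ((x - A) ^ 2 - c) := by
    intro x
    rcases quadraticChar_isQuadratic F x with hx | hx | hx
    · rw [hx, quadraticChar_eq_zero_iff.mp hx, zero_sub, neg_sq, hA]
      norm_num
    · rw [hx]
      rcases quadraticChar_isQuadratic F ((x - A) ^ 2 - c) with hg | hg | hg <;> simp [hg]
    · rcases quadraticChar_isQuadratic F ((x - A) ^ 2 - c) with hg | hg | hg
      · exact absurd hx (hroots x (sub_eq_zero.mp (quadraticChar_eq_zero_iff.mp hg)))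
      · simp [hx, hg]
      · exact absurd hg (h x hx)
  have strict : ∑ x : F, -quadraticChar F x < ∑ x : F, quadraticChar F ((x - A) ^ 2 - c) :=
    sum_lt_sum (fun x _ => pointwise x) ⟨0, mem_univ _, by simp [hA]⟩
  rw [sum_neg_distrib, quadraticChar_sum_zero hF,
    Fintype.sum_equiv (Equiv.subRight A) (fun x => quadraticChar F ((x - A) ^ 2 - c))
      (fun z => quadraticChar F (z ^ 2 - c)) fun _ => rfl,
    quadraticChar_sum_sq_sub hF hc] at strict
  norm_num at strict

end QuadraticCharSums

namespace PadicInt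

variable {p : ℕ} [Fact p.Prime]

@[simp, norm_cast]
theorem coe_ofNat (n : ℕ) [n.AtLeastTwo] : ((ofNat(n) : ℤ_[p]) : ℚ_[p]) = ofNat(n) :=
  rfl

theorem exists_isRoot_toZMod_eq {f : Polynomial ℤ_[p]} (hf : f.Monic) (a₀ : ℤ_[p])
    (h₁ : toZMod (f.eval a₀) = 0) (h₂ : toZMod (f.derivative.eval a₀) ≠ 0) :
    ∃ a : ℤ_[p], f.IsRoot a ∧ toZMod a = toZMod a₀ := by
  rw [← RingHom.mem_ker, ker_toZMod] at h₁
  rw [Ne, ← RingHom.mem_ker, ker_toZMod] at h₂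
  obtain ⟨a, hroot, ha⟩ := HenselianRing.is_henselian f hf a₀ h₁
    (.map _ (by rwa [IsLocalRing.mem_maximalIdeal, mem_nonunits_iff, not_not] at h₂))
  rw [← ker_toZMod, RingHom.mem_ker, map_sub, sub_eq_zero] at ha
  exact ⟨a, hroot, ha⟩

theorem exists_sq_eq_of_toZMod_sq_eq (hp : p ≠ 2) {z w₀ : ℤ_[p]} (hw₀ : toZMod w₀ ≠ 0)
    (h : toZMod w₀ ^ 2 = toZMod z) : ∃ w : ℤ_[p], w ^ 2 = z ∧ toZMod w = toZMod w₀ := by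
  have htwo : (2 : ZMod p) ≠ 0 := Ring.two_ne_zero (by rwa [ZMod.ringChar_zmod_n])
  have hderiv : (Polynomial.X ^ 2 - Polynomial.C z).derivative.eval w₀ = 2 * w₀ := by
    simp [one_add_one_eq_two]
  obtain ⟨w, hroot, hw⟩ :=
    exists_isRoot_toZMod_eq (Polynomial.monic_X_pow_sub_C z two_ne_zero) w₀
    (by simp [h]) (by rw [hderiv, map_mul, map_ofNat]; exact mul_ne_zero htwo hw₀)
  exact ⟨w, sub_eq_zero.mp (by simpa using hroot), hw⟩

theorem isSquare_of_quadraticChar_toZMod_eq_one (hp : p ≠ 2) {z : ℤ_[p]}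
    (h : quadraticChar (ZMod p) (toZMod z) = 1) : IsSquare z := by
  have hz : toZMod z ≠ 0 := fun h0 => by simp [h0] at h
  obtain ⟨s, hs⟩ := (quadraticChar_one_iff_isSquare hz).mp h
  obtain ⟨w₀, rfl⟩ := ZMod.ringHom_surjective toZMod s
  obtain ⟨w, hw, -⟩ := exists_sq_eq_of_toZMod_sq_eq (z := z) hp
    (fun h0 => hz (by rw [hs, h0, mul_zero])) (by rw [hs, sq])
  exact ⟨w, by rw [← hw, sq]⟩

theorem exists_point_quadraticChar_toZMod_eq_neg_one (hp : p ≠ 2) {a b : ℤ_[p]}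
    (hb : toZMod b ≠ 0) (hD : quadraticChar (ZMod p) (toZMod (a ^ 2 - 4 * b)) = 1) :
    ∃ x y : ℤ_[p], y ^ 2 = x * (x ^ 2 - 2 * a * x + (a ^ 2 - 4 * b)) ∧
      quadraticChar (ZMod p) (toZMod x) = -1 := by
  have hF : ringChar (ZMod p) ≠ 2 := by rwa [ZMod.ringChar_zmod_n]
  have h4b : toZMod (4 * b) ≠ 0 := by
    rw [map_mul, map_ofNat, show (4 : ZMod p) = 2 ^ 2 by norm_num]
    exact mul_ne_zero (pow_ne_zero 2 (Ring.two_ne_zero hF)) hb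
  by_cases hroot : ∃ r, (r - toZMod a) ^ 2 = toZMod (4 * b) ∧ quadraticChar (ZMod p) r = -1
  · obtain ⟨r, hr, hχr⟩ := hroot
    obtain ⟨T₀, hT₀⟩ := ZMod.ringHom_surjective toZMod (r - toZMod a)
    obtain ⟨T, hT, hTr⟩ := exists_sq_eq_of_toZMod_sq_eq hp
      (fun h0 => h4b (by rw [← hr, ← hT₀, h0, sq, mul_zero])) (hT₀ ▸ hr)
    refine ⟨a + T, 0, by linear_combination (-(a + T)) * hT, ?_⟩
    rwa [map_add, hTr, hT₀, add_sub_cancel]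
  · push Not at hroot
    obtain ⟨x₀, hx₀, hg⟩ := exists_quadraticChar_eq_neg_one_and_sub_sq_sub hF h4b
      (by rwa [← map_pow, ← map_sub]) hroot
    obtain ⟨x, rfl⟩ := ZMod.ringHom_surjective toZMod x₀
    obtain ⟨y, hy⟩ := isSquare_of_quadraticChar_toZMod_eq_one hp
      (z := x * (x ^ 2 - 2 * a * x + (a ^ 2 - 4 * b))) (by
        rw [show toZMod (x * (x ^ 2 - 2 * a * x + (a ^ 2 - 4 * b))) =
          toZMod x * ((toZMod x - toZMod a) ^ 2 - toZMod (4 * b)) by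
            simp only [map_mul, map_sub, map_add, map_pow, map_ofNat]; ring,
          map_mul, hx₀, hg]
        norm_num)
    exact ⟨x, y, by rw [hy, sq], hx₀⟩

end PadicInt

section LocDescent

variable {a b : ℤ} {K : Type*} [Field K] {c : K}

theorem exists_ne_zero_mul_sq_eq_of_isSquare_mul {X : K} (hc : c ≠ 0) (hX : X ≠ 0)
    (h : IsSquare (c * X)) : ∃ u : K, u ≠ 0 ∧ c * u ^ 2 = X := by
  obtain ⟨w, hw⟩ := h
  have hw0 : w ≠ 0 := by rintro rfl; simp [hc, hX] at hw
  refine ⟨w / c, div_ne_zero hw0 hc, ?_⟩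
  field_simp
  linear_combination -hw

theorem locDescent_of_isSquare (hc : c ≠ 0) (h : IsSquare c) : LocDescent a b c :=
  let ⟨u, hu⟩ := h
  ⟨hc, .inl ⟨u, by rw [hu, sq]⟩⟩

theorem locDescent_of_isSquare_mul_disc (hc : c ≠ 0) (hD : (a : K) ^ 2 - 4 * (b : K) ≠ 0)
    (h : IsSquare (c * ((a : K) ^ 2 - 4 * (b : K)))) : LocDescent a b c :=
  ⟨hc, .inr (.inl (exists_ne_zero_mul_sq_eq_of_isSquare_mul hc hD h))⟩

theorem locDescent_of_isSquare_mul_fst (hc : c ≠ 0) {x y : K} (hx : x ≠ 0)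
    (hxy : y ^ 2 = x * (x ^ 2 - 2 * (a : K) * x + ((a : K) ^ 2 - 4 * (b : K))))
    (h : IsSquare (c * x)) : LocDescent a b c :=
  let ⟨u, hu, hcu⟩ := exists_ne_zero_mul_sq_eq_of_isSquare_mul hc hx h
  ⟨hc, .inr (.inr ⟨x, y, u, hx, hu, hxy, hcu⟩)⟩

end LocDescent

open PadicInt in
theorem locDescent_padic_of_toZMod_ne_zero {p : ℕ} [Fact p.Prime] {a b : ℤ}
    (hgood : ¬ (p : ℤ) ∣ 2 * b * (a ^ 2 - 4 * b)) {z : ℤ_[p]} (hz : toZMod z ≠ 0) :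
    LocDescent a b (z : ℚ_[p]) := by
  have hp : p ≠ 2 := by
    rintro rfl
    exact hgood (dvd_mul_of_dvd_left (dvd_mul_right 2 b) _)
  have hb : toZMod (b : ℤ_[p]) ≠ 0 := by
    rw [map_intCast, Ne, ZMod.intCast_zmod_eq_zero_iff_dvd]
    exact fun h => hgood (dvd_mul_of_dvd_left (h.mul_left 2) _)
  have hD : toZMod ((a : ℤ_[p]) ^ 2 - 4 * (b : ℤ_[p])) ≠ 0 := by
    rw [show (a : ℤ_[p]) ^ 2 - 4 * (b : ℤ_[p]) = ((a ^ 2 - 4 * b : ℤ) : ℤ_[p]) by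
        push_cast; ring,
      map_intCast, Ne, ZMod.intCast_zmod_eq_zero_iff_dvd]
    exact fun h => hgood (h.mul_left _)
  have hz0 : (z : ℚ_[p]) ≠ 0 := by
    rw [PadicInt.coe_ne_zero]; rintro rfl; exact hz (map_zero _)
  have coe_isSquare {w : ℤ_[p]} (hw : quadraticChar (ZMod p) (toZMod w) = 1) :
      IsSquare (w : ℚ_[p]) :=
    (isSquare_of_quadraticChar_toZMod_eq_one hp hw).map PadicInt.Coe.ringHom
  rcases quadraticChar_isQuadratic (ZMod p) (toZMod z) with hχz | hχz | hχz
  · exact absurd (quadraticChar_eq_zero_iff.mp hχz) hz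
  · exact locDescent_of_isSquare hz0 (coe_isSquare hχz)
  rcases quadraticChar_isQuadratic (ZMod p) (toZMod ((a : ℤ_[p]) ^ 2 - 4 * (b : ℤ_[p])))
    with hχD | hχD | hχD
  · exact absurd (quadraticChar_eq_zero_iff.mp hχD) hD
  · obtain ⟨x, y, hxy, hχx⟩ := exists_point_quadraticChar_toZMod_eq_neg_one hp hb hχD
    refine locDescent_of_isSquare_mul_fst hz0 (x := x) (y := y) ?_ ?_ ?_
    · rw [PadicInt.coe_ne_zero]; rintro rfl; simp at hχx
    · exact_mod_cast congrArg ((↑) : ℤ_[p] → ℚ_[p]) hxy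
    · exact coe_isSquare (w := z * x) (by rw [map_mul, map_mul, hχz, hχx]; norm_num)
  · have hDQ : (((a : ℤ_[p]) ^ 2 - 4 * (b : ℤ_[p]) : ℤ_[p]) : ℚ_[p]) =
        (a : ℚ_[p]) ^ 2 - 4 * (b : ℚ_[p]) := by push_cast; ring
    refine locDescent_of_isSquare_mul_disc hz0 (hDQ ▸ ?_) (hDQ ▸ ?_)
    · exact PadicInt.coe_ne_zero.mpr fun h => hD (by rw [h, map_zero])
    · exact coe_isSquare (w := z * _) (by rw [map_mul, map_mul, hχz, hχD]; norm_num)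

theorem stmt6_general (a b : ℤ) (d : ℤ)
    (hd : Admissible a b d) :
    ∀ q : ℕ, q.Prime → (q : ℤ) ∣ d → (-(q : ℚ)) ∈ SelSetTrunc a b d := by
  intro q hq hqd
  obtain ⟨hdpos, -, -, hadm⟩ := hd
  obtain ⟨-, -, hsq⟩ := hadm q
    (Nat.mem_primeFactors.mpr ⟨hq, Int.natCast_dvd.mp hqd, Int.natAbs_ne_zero.mpr hdpos.ne'⟩)
  refine ⟨neg_ne_zero.mpr (Nat.cast_ne_zero.mpr hq.ne_zero), fun p _ hpd => ?_⟩
  by_cases hbad : (p : ℤ) ∣ 2 * b * (a ^ 2 - 4 * b)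
  · obtain ⟨u, hu⟩ := hsq p hbad
    have hq0 : ((-(q : ℚ) : ℚ) : ℚ_[p]) ≠ 0 := by
      push_cast; exact neg_ne_zero.mpr (Nat.cast_ne_zero.mpr hq.ne_zero)
    exact locDescent_of_isSquare hq0 ⟨u, by push_cast at hu ⊢; rw [← sq, hu]⟩
  · have hcast : ((-(q : ℚ) : ℚ) : ℚ_[p]) = (((-q : ℤ) : ℤ_[p]) : ℚ_[p]) := by
      push_cast; rfl
    rw [hcast]
    refine locDescent_padic_of_toZMod_ne_zero hbad ?_
    rw [map_intCast, Ne, ZMod.intCast_zmod_eq_zero_iff_dvd, dvd_neg]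
    exact fun hpq => hpd (hpq.trans hqd)

theorem stmt6 (a b : ℤ) (hab : b * (a ^ 2 - 4 * b) ≠ 0) (d : ℤ)
    (hd : Admissible a b d) :
    ∀ q : ℕ, q.Prime → (q : ℤ) ∣ d → (-(q : ℚ)) ∈ SelSetTrunc a b d :=
  stmt6_general a b d hd
end

section
/- Let d be admissible for (a,b), and let q̃ be a prime with q̃ ≡ 7 (mod 8), q̃ ∤ b·(a² − 4b), and (−q̃ | p) = 1 for every odd prime p dividing b·(a² − 4b). Then every c ∈ Sel^φ_{S_d}(a,b) with c > 0 and λ_q(c) = 0 for all primes q dividing d satisfies γ_{q̃}(c) = 0. -/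
open scoped Classical

/-! Write `c = m r²` with `m` squarefree. At a prime `p ∤ 2b(a² - 4b)` outside `S_d`, an ultrametric
estimate on `y² = x(x² - 2ax + a² - 4b)` shows that every element of `L_{a,b}(ℚ_p)` has even
valuation, and `λ_q(c) = 0` gives the same at `q ∣ d`; so every prime factor of `m` divides
`2b(a² - 4b)`. Since `q̃ ≡ 7 (mod 8)`, `2` is a square mod `q̃` and quadratic reciprocity turns
`(-q̃ | p) = 1` into `(p | q̃) = 1`. Hence `m` is a nonzero square mod `q̃`, so a square in `ℚ_q̃`
by Hensel's lemma, and the unit part of `c` at `q̃` is a square. -/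

namespace IsUltrametricDist

lemma norm_sub_le_max {G : Type*} [SeminormedAddGroup G] [IsUltrametricDist G] (x y : G) :
    ‖x - y‖ ≤ max ‖x‖ ‖y‖ := by
  simpa only [sub_eq_add_neg, norm_neg] using norm_add_le_max x (-y)

end IsUltrametricDist

open IsUltrametricDist

section Ultrametric

variable {K : Type*} [NormedField K] [IsUltrametricDist K]

/- The norm of `x² - A x + D` is `1` when `‖x‖ < 1` and `‖x‖²` when `‖x‖ > 1`, so in either case
`‖x‖ = ‖y‖² / ‖x² - A x + D‖` is the norm of a square. -/
lemma exists_norm_eq_norm_sq_of_sq_eq_mul {A D x y : K} (hA : ‖A‖ ≤ 1) (hD : ‖D‖ = 1)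
    (hy : y ^ 2 = x * (x ^ 2 - A * x + D)) : ∃ w : K, ‖x‖ = ‖w‖ ^ 2 := by
  have hy' : ‖y‖ ^ 2 = ‖x‖ * ‖x ^ 2 - A * x + D‖ := by rw [← norm_pow, hy, norm_mul]
  rcases lt_trichotomy ‖x‖ 1 with hlt | heq | hgt
  · have hsmall : ‖x * (x - A)‖ < ‖D‖ := by
      rw [norm_mul, hD]
      have : ‖x - A‖ ≤ 1 := (norm_sub_le_max x A).trans (max_le hlt.le hA)
      nlinarith [norm_nonneg x, norm_nonneg (x - A)]
    have hQ : ‖x ^ 2 - A * x + D‖ = 1 := by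
      rw [show x ^ 2 - A * x + D = x * (x - A) + D by ring,
        norm_add_eq_max_of_norm_ne_norm hsmall.ne, max_eq_right hsmall.le, hD]
    exact ⟨y, by rw [hy', hQ, mul_one]⟩
  · exact ⟨1, by rw [heq, norm_one, one_pow]⟩
  · have hsmall : ‖D - A * x‖ < ‖x ^ 2‖ := by
      have hAx : ‖A * x‖ ≤ ‖x‖ := by
        rw [norm_mul]; nlinarith [norm_nonneg A, norm_nonneg x]
      calc ‖D - A * x‖ ≤ ‖x‖ := (norm_sub_le_max D (A * x)).trans (max_le (hD ▸ hgt.le) hAx)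
        _ < ‖x ^ 2‖ := by rw [norm_pow]; nlinarith
    have hQ : ‖x ^ 2 - A * x + D‖ = ‖x‖ ^ 2 := by
      rw [show x ^ 2 - A * x + D = x ^ 2 + (D - A * x) by ring,
        norm_add_eq_max_of_norm_ne_norm hsmall.ne', max_eq_left hsmall.le, norm_pow]
    have hx : ‖x‖ ≠ 0 := by positivity
    exact ⟨y / x, by rw [norm_div, div_pow, hy', hQ]; field_simp⟩

lemma LocDescent.exists_norm_eq_norm_sq {a b : ℤ} {c : K} (h2a : ‖2 * (a : K)‖ ≤ 1)
    (hΔ : ‖(a : K) ^ 2 - 4 * (b : K)‖ = 1) (hc : LocDescent a b c) : ∃ w : K, ‖c‖ = ‖w‖ ^ 2 := by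
  obtain ⟨-, ⟨u, rfl⟩ | ⟨u, hu, hcu⟩ | ⟨x, y, u, -, hu, hy, hcu⟩⟩ := hc
  · exact ⟨u, norm_pow u 2⟩
  · refine ⟨u⁻¹, ?_⟩
    have h := congrArg norm hcu
    rw [norm_mul, norm_pow, hΔ] at h
    rw [norm_inv, inv_pow, eq_inv_of_mul_eq_one_left h]
  · obtain ⟨w, hw⟩ := exists_norm_eq_norm_sq_of_sq_eq_mul h2a hΔ hy
    have hu' : ‖u‖ ≠ 0 := norm_ne_zero_iff.mpr hu
    refine ⟨w / u, ?_⟩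
    have h := congrArg norm hcu
    rw [norm_mul, norm_pow, hw] at h
    rw [norm_div, div_pow, ← h]
    field_simp

end Ultrametric

namespace PadicInt

variable {p : ℕ} [Fact p.Prime]

lemma norm_lt_one_iff_toZMod_eq_zero {z : ℤ_[p]} : ‖z‖ < 1 ↔ toZMod z = 0 := by
  rw [← RingHom.mem_ker, ker_toZMod, IsLocalRing.mem_maximalIdeal, mem_nonunits_iff,
    not_isUnit_iff]

lemma isSquare_of_isSquare_toZMod_s7 (hp : p ≠ 2) {u : ℤ_[p]} (hu : toZMod u ≠ 0)
    (hsq : IsSquare (toZMod u)) : IsSquare u := by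
  obtain ⟨s, hs⟩ := hsq
  obtain ⟨a, rfl⟩ := ZMod.ringHom_surjective (toZMod : ℤ_[p] →+* ZMod p) s
  set F : Polynomial ℤ_[p] := Polynomial.X ^ 2 - Polynomial.C u
  have hF : F.aeval a = a ^ 2 - u := by simp [F]
  have hF' : F.derivative.aeval a = 2 * a := by simp [F, one_add_one_eq_two]
  have h2 : (2 : ZMod p) ≠ 0 := Ring.two_ne_zero (by rwa [ZMod.ringChar_zmod_n])
  have hda : ‖F.derivative.aeval a‖ = 1 := by
    refine (norm_le_one _).antisymm (not_lt.mp ?_)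
    rw [hF', norm_lt_one_iff_toZMod_eq_zero, map_mul, map_ofNat]
    exact mul_ne_zero h2 (left_ne_zero_of_mul (hs ▸ hu))
  obtain ⟨z, hz, -⟩ := hensels_lemma (F := F) (a := a) (by
    rw [hda, one_pow, hF, norm_lt_one_iff_toZMod_eq_zero, map_sub, map_pow, hs, sq, sub_self])
  exact ⟨z, by simpa [F, sub_eq_zero, sq, eq_comm] using hz⟩

end PadicInt

namespace Padic

variable {p : ℕ} [Fact p.Prime]

lemma even_valuation_of_norm_eq_norm_sq {z w : ℚ_[p]} (hz : z ≠ 0) (h : ‖z‖ = ‖w‖ ^ 2) :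
    Even z.valuation := by
  have hw : w ≠ 0 := by rintro rfl; simp [hz] at h
  have hp : (1 : ℝ) < p := mod_cast (Fact.out : p.Prime).one_lt
  rw [norm_eq_zpow_neg_valuation hz, norm_eq_zpow_neg_valuation hw, ← zpow_natCast,
    ← zpow_mul] at h
  have := zpow_right_injective₀ (by positivity) hp.ne' h
  exact ⟨w.valuation, by push_cast at this; omega⟩

lemma isSquare_natCast_of_isSquare_zmod (hp : p ≠ 2) {m : ℕ} (hpm : ¬ p ∣ m)
    (hm : IsSquare (m : ZMod p)) : IsSquare (m : ℚ_[p]) := by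
  have hu : PadicInt.toZMod (m : ℤ_[p]) = m := map_natCast _ m
  have hm0 : (m : ZMod p) ≠ 0 := (ZMod.natCast_eq_zero_iff m p).not.mpr hpm
  obtain ⟨z, hz⟩ := PadicInt.isSquare_of_isSquare_toZMod_s7 hp (hu ▸ hm0) (hu ▸ hm)
  exact ⟨z, by rw [← PadicInt.coe_natCast, hz, PadicInt.coe_mul]⟩

end Padic

lemma LocDescent.even_padicValRat {a b : ℤ} {p : ℕ} [Fact p.Prime]
    (hp : ¬ (p : ℤ) ∣ 2 * b * (a ^ 2 - 4 * b)) {c : ℚ} (hc : LocDescent a b (c : ℚ_[p])) :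
    Even (padicValRat p c) := by
  have h2a : ‖2 * (a : ℚ_[p])‖ ≤ 1 := mod_cast Padic.norm_int_le_one (2 * a)
  have hΔ : ‖(a : ℚ_[p]) ^ 2 - 4 * (b : ℚ_[p])‖ = 1 := by
    have hpΔ : ¬ (p : ℤ) ∣ a ^ 2 - 4 * b := fun h => hp (h.mul_left _)
    exact_mod_cast (Padic.norm_int_le_one _).antisymm
      (not_lt.mp (Padic.norm_intCast_lt_one_iff.not.mpr hpΔ))
  obtain ⟨w, hw⟩ := hc.exists_norm_eq_norm_sq h2a hΔ
  rw [← Padic.valuation_ratCast]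
  exact Padic.even_valuation_of_norm_eq_norm_sq hc.1 hw

lemma lamF_eq_zero_iff_even {q : ℕ} {c : ℚ} : lamF q c = 0 ↔ Even (padicValRat q c) := by
  rw [lamF, ZMod.intCast_eq_zero_iff_even]

lemma prime_dvd_of_odd_padicValRat_of_mem_selSetTrunc {a b d : ℤ} {c : ℚ}
    (hc : c ∈ SelSetTrunc a b d) (hlam : ∀ q : ℕ, q.Prime → (q : ℤ) ∣ d → lamF q c = 0)
    {p : ℕ} (hp : p.Prime) (hodd : Odd (padicValRat p c)) :
    (p : ℤ) ∣ 2 * b * (a ^ 2 - 4 * b) := by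
  have : Fact p.Prime := ⟨hp⟩
  rw [← Int.not_even_iff_odd] at hodd
  by_cases hpd : (p : ℤ) ∣ d
  · exact absurd (lamF_eq_zero_iff_even.mp (hlam p hp hpd)) hodd
  · by_contra hpΔ
    exact hodd ((hc.2 p hpd).even_padicValRat hpΔ)

lemma Rat.exists_squarefree_mul_sq {c : ℚ} (hc : 0 < c) :
    ∃ m : ℕ, Squarefree m ∧ ∃ r : ℚ, r ≠ 0 ∧ c = m * r ^ 2 := by
  obtain ⟨m, k, hkm, hm⟩ := Nat.sq_mul_squarefree (c.num.natAbs * c.den)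
  have hk : k ≠ 0 := by
    rintro rfl
    simp [eq_comm, c.den_nz, (Rat.num_pos.mpr hc).ne'] at hkm
  refine ⟨m, hm, k / c.den, by positivity, ?_⟩
  have hnum : (c.num.natAbs : ℚ) = c.num := by
    rw [Nat.cast_natAbs, Int.cast_abs, abs_of_pos (by exact_mod_cast Rat.num_pos.mpr hc)]
  have hkm' : (k : ℚ) ^ 2 * m = c.num * c.den := by rw [← hnum]; exact_mod_cast hkm
  have hden : (c.den : ℚ) ≠ 0 := by positivity
  rw [div_pow, mul_div_assoc', ← mul_comm, hkm', ← Rat.mul_den_eq_num]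
  field_simp

lemma padicValRat_natCast_mul_sq {p : ℕ} [Fact p.Prime] {m : ℕ} (hm : m ≠ 0) {r : ℚ}
    (hr : r ≠ 0) : padicValRat p (m * r ^ 2) = padicValNat p m + 2 * padicValRat p r := by
  rw [padicValRat.mul (by exact_mod_cast hm) (pow_ne_zero 2 hr), padicValRat.pow r,
    padicValRat.of_nat]
  ring

lemma odd_padicValRat_natCast_mul_sq {m : ℕ} (hm : Squarefree m) {r : ℚ} (hr : r ≠ 0)
    {p : ℕ} (hp : p ∈ m.primeFactors) : Odd (padicValRat p (m * r ^ 2)) := by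
  have hpp := Nat.prime_of_mem_primeFactors hp
  have : Fact p.Prime := ⟨hpp⟩
  have hv : padicValNat p m = 1 := by
    rw [← Nat.factorization_def m hpp]
    exact Nat.factorization_eq_one_of_squarefree hm hpp (Nat.dvd_of_mem_primeFactors hp)
  rw [padicValRat_natCast_mul_sq hm.ne_zero hr, hv]
  exact ⟨padicValRat p r, by push_cast; ring⟩

lemma gamF_natCast_mul_sq_eq_zero {q : ℕ} [Fact q.Prime] {m : ℕ} (hqm : ¬ q ∣ m)
    (hm : IsSquare (m : ℚ_[q])) {r : ℚ} (hr : r ≠ 0) : gamF q (m * r ^ 2) = 0 := by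
  have hm0 : m ≠ 0 := by rintro rfl; exact hqm (dvd_zero q)
  set s := r * (q : ℚ) ^ (-padicValRat q r)
  have hunit : (m * r ^ 2 : ℚ) * (q : ℚ) ^ (-padicValRat q (m * r ^ 2)) = m * s ^ 2 := by
    rw [padicValRat_natCast_mul_sq hm0 hr, padicValNat.eq_zero_of_not_dvd hqm, mul_pow,
      ← zpow_natCast ((q : ℚ) ^ _), ← zpow_mul]
    ring_nf
  obtain ⟨t, ht⟩ := hm
  rw [gamF, if_pos ⟨t * s, by rw [hunit]; push_cast; rw [ht]; ring⟩]

lemma legendreSym_neg_eq_legendreSym_of_mod_four_eq_three {p q : ℕ} [Fact p.Prime]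
    [Fact q.Prime] (hp : p ≠ 2) (hq : q % 4 = 3) : legendreSym p (-(q : ℤ)) = legendreSym q p := by
  have hp2 : p % 2 = 1 := (Nat.Prime.mod_two_eq_one_iff_ne_two Fact.out).mpr hp
  rw [neg_eq_neg_one_mul, legendreSym.mul, legendreSym.at_neg_one hp, ZMod.χ₄_eq_neg_one_pow hp2,
    legendreSym.quadratic_reciprocity' hp (by omega), pow_mul',
    ZMod.neg_one_pow_div_two_of_three_mod_four hq]

lemma Int.natCast_dvd_of_dvd_two_mul {p : ℕ} (hp : p.Prime) (hp2 : p ≠ 2) {D : ℤ}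
    (h : (p : ℤ) ∣ 2 * D) : (p : ℤ) ∣ D := by
  refine ((Nat.prime_iff_prime_int.mp hp).dvd_or_dvd h).resolve_left fun h2 => hp2 ?_
  exact (Nat.prime_dvd_prime_iff_eq hp Nat.prime_two).mp (by exact_mod_cast h2)

lemma isSquare_natCast_zmod_of_dvd_two_mul {D : ℤ} {q : ℕ} [Fact q.Prime] (h7 : q % 8 = 7)
    (hqD : ¬ (q : ℤ) ∣ D)
    (hleg : ∀ (p : ℕ) [Fact p.Prime], p ≠ 2 → (p : ℤ) ∣ D → legendreSym p (-(q : ℤ)) = 1)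
    {p : ℕ} (hp : p.Prime) (hpD : (p : ℤ) ∣ 2 * D) : IsSquare (p : ZMod q) := by
  have hq2 : q ≠ 2 := by omega
  by_cases hp2 : p = 2
  · subst hp2
    exact_mod_cast (ZMod.exists_sq_eq_two_iff hq2).mpr (Or.inr h7)
  have : Fact p.Prime := ⟨hp⟩
  have hpD' := Int.natCast_dvd_of_dvd_two_mul hp hp2 hpD
  have hqp : ¬ q ∣ p := fun h => hqD <| by
    rwa [(Nat.prime_dvd_prime_iff_eq Fact.out hp).mp h]
  rw [← legendreSym.eq_one_iff' q ((ZMod.natCast_eq_zero_iff p q).not.mpr hqp),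
    ← legendreSym_neg_eq_legendreSym_of_mod_four_eq_three hp2 (by omega)]
  exact hleg p hp2 hpD'

theorem stmt7_general (a b : ℤ) (d : ℤ)
    (qt : ℕ) [Fact qt.Prime] (h7 : qt % 8 = 7) (hnd : ¬ (qt : ℤ) ∣ b * (a ^ 2 - 4 * b))
    (hleg : ∀ (p : ℕ) [Fact p.Prime], p ≠ 2 → (p : ℤ) ∣ b * (a ^ 2 - 4 * b) →
      legendreSym p (-(qt : ℤ)) = 1) :
    ∀ c ∈ SelSetTrunc a b d, 0 < c →
      (∀ q : ℕ, q.Prime → (q : ℤ) ∣ d → lamF q c = 0) → gamF qt c = 0 := by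
  intro c hc hpos hlam
  obtain ⟨m, hm, r, hr, rfl⟩ := Rat.exists_squarefree_mul_sq hpos
  have hdvd : ∀ p ∈ m.primeFactors, (p : ℤ) ∣ 2 * (b * (a ^ 2 - 4 * b)) := fun p hp => by
    rw [← mul_assoc]
    exact prime_dvd_of_odd_padicValRat_of_mem_selSetTrunc hc hlam
      (Nat.prime_of_mem_primeFactors hp) (odd_padicValRat_natCast_mul_sq hm hr hp)
  have hqm : ¬ qt ∣ m := fun h => hnd <| Int.natCast_dvd_of_dvd_two_mul Fact.out (by omega)
    (hdvd qt (Nat.mem_primeFactors.mpr ⟨Fact.out, h, hm.ne_zero⟩))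
  have hmsq : IsSquare (m : ZMod qt) := by
    rw [← Nat.prod_primeFactors_of_squarefree hm, Nat.cast_prod]
    exact Finset.prod_induction _ IsSquare (fun _ _ => IsSquare.mul) IsSquare.one fun p hp =>
      isSquare_natCast_zmod_of_dvd_two_mul h7 hnd hleg (Nat.prime_of_mem_primeFactors hp)
        (hdvd p hp)
  exact gamF_natCast_mul_sq_eq_zero hqm
    (Padic.isSquare_natCast_of_isSquare_zmod (by omega) hqm hmsq) hr

theorem stmt7 (a b : ℤ) (hab : b * (a ^ 2 - 4 * b) ≠ 0) (d : ℤ)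
    (hd : Admissible a b d)
    (qt : ℕ) [Fact qt.Prime] (h7 : qt % 8 = 7) (hnd : ¬ (qt : ℤ) ∣ b * (a ^ 2 - 4 * b))
    (hleg : ∀ (p : ℕ) [Fact p.Prime], p ≠ 2 → (p : ℤ) ∣ b * (a ^ 2 - 4 * b) →
      legendreSym p (-(qt : ℤ)) = 1) :
    ∀ c ∈ SelSetTrunc a b d, 0 < c →
      (∀ q : ℕ, q.Prime → (q : ℤ) ∣ d → lamF q c = 0) → gamF qt c = 0 :=
  stmt7_general a b d qt h7 hnd hleg
end
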